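/- arXiv:2407.08078 — 2 statements merged into one kernel-verified Lean document; each statement's English description precedes it below -/
import Mathlib

section
/- Let H = T_H ⋊ H₀ be split, h = t^λ h₀, h' = t^{λ'} h₀' ∈ H, and suppose Fix(h₀) = {0}. Then for each u ∈ H₀ with u h₀ u⁻¹ = h₀' and λ' - uλ ∈ (Id - h₀')L_H, there is exactly one η ∈ L_H such that t^η u conjugates h to h', namely η = (Id - h₀')⁻¹(λ' - uλ). Hence the coconjugation set {k ∈ H : khk⁻¹ = h'} is in bijection with {u ∈ H₀ : u h₀ u⁻¹ = h₀' and λ' - uλ ∈ (Id - h₀')L_H}. -/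
/-- Euclidean n-space. -/
abbrev E (n : ℕ) := EuclideanSpace ℝ (Fin n)

/-- The translation `t^v : x ↦ x + v` as a Euclidean isometry. -/
noncomputable def tr {n : ℕ} (v : E n) : E n ≃ᵢ E n := IsometryEquiv.addRight v

/-- An orthogonal transformation (linear isometry) as a Euclidean isometry. -/
noncomputable def lin {n : ℕ} (g : E n ≃ₗᵢ[ℝ] E n) : E n ≃ᵢ E n := g.toIsometryEquiv

/-- The isometry `t^v ∘ g : x ↦ g x + v`. -/
noncomputable def elt {n : ℕ} (v : E n) (g : E n ≃ₗᵢ[ℝ] E n) : E n ≃ᵢ E n :=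
  (lin g).trans (tr v)

/-- The move-set of an isometry. -/
def movSet {n : ℕ} (g : E n ≃ᵢ E n) : Set (E n) := {y | ∃ x, g x = x + y}

/-- The mod-set of an isometry with respect to a translation module `L`. -/
def modSet {n : ℕ} (L : AddSubgroup (E n)) (g : E n ≃ᵢ E n) : Set (E n) :=
  {y | ∃ μ ∈ L, y = g μ - μ}

lemma elt_apply {n : ℕ} (v : E n) (g : E n ≃ₗᵢ[ℝ] E n) (x : E n) : elt v g x = g x + v := rfl

lemma elt_mul {n : ℕ} (a b : E n) (u g : E n ≃ₗᵢ[ℝ] E n) :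
    elt a u * elt b g = elt (a + u b) (u * g) := by
  ext x
  simp [elt_apply, IsometryEquiv.mul_apply, LinearIsometryEquiv.coe_mul, map_add]
  abel

lemma elt_one {n : ℕ} : elt (0 : E n) 1 = 1 := by
  ext x
  simp only [elt_apply, LinearIsometryEquiv.coe_one, id_eq, add_zero, IsometryEquiv.coe_one]

lemma elt_inv {n : ℕ} (a : E n) (u : E n ≃ₗᵢ[ℝ] E n) :
    (elt a u)⁻¹ = elt (-(u⁻¹ a)) u⁻¹ := by
  symm
  rw [eq_inv_iff_mul_eq_one, elt_mul]
  simp [elt_one]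

lemma elt_inj {n : ℕ} {a b : E n} {u v : E n ≃ₗᵢ[ℝ] E n} (h : elt a u = elt b v) :
    a = b ∧ u = v := by
  have h0 : ∀ x, u x + a = v x + b := fun x => by
    have := congrArg (fun e : E n ≃ᵢ E n => e x) h
    simpa [elt_apply] using this
  have hab : a = b := by simpa using h0 0
  subst hab
  refine ⟨rfl, LinearIsometryEquiv.ext fun x => by have := h0 x; simpa using this⟩

lemma elt_conj {n : ℕ} (η lam : E n) (u h₀ : E n ≃ₗᵢ[ℝ] E n) :
    elt η u * elt lam h₀ * (elt η u)⁻¹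
      = elt (η + u lam - (u * h₀ * u⁻¹) η) (u * h₀ * u⁻¹) := by
  rw [elt_inv, elt_mul, elt_mul]
  congr 1
  simp [LinearIsometryEquiv.coe_mul, map_neg, sub_eq_add_neg]

lemma conj_iff {n : ℕ} (η lam lam' : E n) (u h₀ h₀' : E n ≃ₗᵢ[ℝ] E n)
    (hc : u * h₀ * u⁻¹ = h₀') :
    elt η u * elt lam h₀ * (elt η u)⁻¹ = elt lam' h₀' ↔ η + u lam - h₀' η = lam' := by
  rw [elt_conj, hc]
  constructor
  · exact fun h => (elt_inj h).1
  · intro h; rw [h]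

lemma key_lemma {n : ℕ} (L : AddSubgroup (E n)) (lam lam' : E n)
    (h₀ h₀' : E n ≃ₗᵢ[ℝ] E n)
    (hfix : ∀ x : E n, h₀ x = x → x = 0)
    (u : E n ≃ₗᵢ[ℝ] E n) (hc : u * h₀ * u⁻¹ = h₀')
    (hex : ∃ μ ∈ L, lam' - u lam = μ - h₀' μ) :
    (∃! η : E n, η ∈ L ∧
        (elt η u) * (elt lam h₀) * (elt η u)⁻¹ = elt lam' h₀') ∧
    (∀ η ∈ L, (elt η u) * (elt lam h₀) * (elt η u)⁻¹ = elt lam' h₀' →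
        η - h₀' η = lam' - u lam) := by
  obtain ⟨μ, hμL, hμeq⟩ := hex
  have fix' : ∀ x : E n, h₀' x = x → x = 0 := by
    intro x hx
    rw [← hc] at hx
    have h1 : u (h₀ (u⁻¹ x)) = x := hx
    have h2 : h₀ (u⁻¹ x) = u⁻¹ x := by
      have := congrArg (u⁻¹ ·) h1
      simpa [LinearIsometryEquiv.inv_def] using this
    have h3 : u⁻¹ x = 0 := hfix _ h2
    have := congrArg (u ·) h3
    simpa [LinearIsometryEquiv.inv_def] using this
  have hconjμ : μ + u lam - h₀' μ = lam' := by
    have : lam' = μ - h₀' μ + u lam := by rw [← hμeq]; abel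
    rw [this]; abel
  constructor
  · refine ⟨μ, ⟨hμL, (conj_iff μ lam lam' u h₀ h₀' hc).mpr hconjμ⟩, ?_⟩
    intro η ⟨hηL, hηc⟩
    have hη : η + u lam - h₀' η = lam' := (conj_iff η lam lam' u h₀ h₀' hc).mp hηc
    have : h₀' (η - μ) = η - μ := by
      rw [map_sub]
      have : η - h₀' η = μ - h₀' μ := by
        have e1 : η - h₀' η = lam' - u lam := by rw [← hη]; abel
        have e2 : μ - h₀' μ = lam' - u lam := by rw [← hconjμ]; abel
        rw [e1, e2]
      have := this
      abel_nf at this ⊢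
      linear_combination (norm := module) -this
    have := fix' _ this
    exact sub_eq_zero.mp this
  · intro η _ hηc
    have hη : η + u lam - h₀' η = lam' := (conj_iff η lam lam' u h₀ h₀' hc).mp hηc
    rw [← hη]; abel

lemma bij_lemma {n : ℕ} (L : AddSubgroup (E n)) (H₀ : Subgroup (E n ≃ₗᵢ[ℝ] E n))
    (lam lam' : E n) (h₀ h₀' : E n ≃ₗᵢ[ℝ] E n)
    (hfix : ∀ x : E n, h₀ x = x → x = 0) :
    Nonempty
      ({k : E n ≃ᵢ E n // (∃ η ∈ L, ∃ v ∈ H₀, k = elt η v) ∧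
          k * (elt lam h₀) * k⁻¹ = elt lam' h₀'} ≃
       {u : E n ≃ₗᵢ[ℝ] E n // u ∈ H₀ ∧ u * h₀ * u⁻¹ = h₀' ∧
          ∃ μ ∈ L, lam' - u lam = μ - h₀' μ}) := by
  classical
  have key : ∀ up : {u : E n ≃ₗᵢ[ℝ] E n // u ∈ H₀ ∧ u * h₀ * u⁻¹ = h₀' ∧
      ∃ μ ∈ L, lam' - u lam = μ - h₀' μ},
      ∃! η : E n, η ∈ L ∧ elt η up.1 * elt lam h₀ * (elt η up.1)⁻¹ = elt lam' h₀' :=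
    fun up => (key_lemma L lam lam' h₀ h₀' hfix up.1 up.2.2.1 up.2.2.2).1
  let ηof := fun up => (key up).choose
  have hηof : ∀ up, (ηof up) ∈ L ∧
      elt (ηof up) up.1 * elt lam h₀ * (elt (ηof up) up.1)⁻¹ = elt lam' h₀' :=
    fun up => (key up).choose_spec.1
  have huniq : ∀ up, ∀ y : E n,
      (y ∈ L ∧ elt y up.1 * elt lam h₀ * (elt y up.1)⁻¹ = elt lam' h₀') → y = ηof up :=
    fun up => (key up).choose_spec.2
  let F : {u : E n ≃ₗᵢ[ℝ] E n // u ∈ H₀ ∧ u * h₀ * u⁻¹ = h₀' ∧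
        ∃ μ ∈ L, lam' - u lam = μ - h₀' μ} →
      {k : E n ≃ᵢ E n // (∃ η ∈ L, ∃ v ∈ H₀, k = elt η v) ∧
        k * (elt lam h₀) * k⁻¹ = elt lam' h₀'} :=
    fun up => ⟨elt (ηof up) up.1, ⟨ηof up, (hηof up).1, up.1, up.2.1, rfl⟩, (hηof up).2⟩
  refine ⟨(Equiv.ofBijective F ⟨?_, ?_⟩).symm⟩
  · intro u1 u2 h
    have h' : elt (ηof u1) u1.1 = elt (ηof u2) u2.1 := congrArg Subtype.val h
    exact Subtype.ext (elt_inj h').2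
  · rintro ⟨k, ⟨η, hη, v, hv, hk⟩, hconj⟩
    subst hk
    have hcf := elt_conj η lam v h₀
    rw [hconj] at hcf
    have hinj := elt_inj hcf
    have hc : v * h₀ * v⁻¹ = h₀' := hinj.2.symm
    have hlamEq : lam' = η + v lam - h₀' η := by rw [hinj.1, hc]
    have hex : lam' - v lam = η - h₀' η := by rw [hlamEq]; abel
    refine ⟨⟨v, hv, hc, η, hη, hex⟩, ?_⟩
    have h_eta : ηof ⟨v, hv, hc, η, hη, hex⟩ = η :=
      (huniq ⟨v, hv, hc, η, hη, hex⟩ η ⟨hη, hconj⟩).symm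
    exact Subtype.ext (by simp only [F]; rw [h_eta])


/-- If `Fix(h₀) = {0}`, then for each translation-compatible `u` the conjugator
`t^η u` from `h` to `h'` has a unique `η ∈ L_H`, characterized by
`(Id - h₀')η = λ' - uλ`; hence the coconjugation set is in bijection with the
translation-compatible part of the spherical coconjugation set. -/
theorem stmt17 {n : ℕ} (L : AddSubgroup (E n)) (H₀ : Subgroup (E n ≃ₗᵢ[ℝ] E n))
    (hL : ∀ u ∈ H₀, ∀ v ∈ L, u v ∈ L)
    (lam lam' : E n) (hlam : lam ∈ L) (hlam' : lam' ∈ L)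
    (h₀ h₀' : E n ≃ₗᵢ[ℝ] E n) (hh₀ : h₀ ∈ H₀) (hh₀' : h₀' ∈ H₀)
    (hfix : ∀ x : E n, h₀ x = x → x = 0) :
    (∀ u ∈ H₀, u * h₀ * u⁻¹ = h₀' → (∃ μ ∈ L, lam' - u lam = μ - h₀' μ) →
      (∃! η : E n, η ∈ L ∧
          (elt η u) * (elt lam h₀) * (elt η u)⁻¹ = elt lam' h₀') ∧
      (∀ η ∈ L, (elt η u) * (elt lam h₀) * (elt η u)⁻¹ = elt lam' h₀' →
          η - h₀' η = lam' - u lam)) ∧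
    Nonempty
      ({k : E n ≃ᵢ E n // (∃ η ∈ L, ∃ v ∈ H₀, k = elt η v) ∧
          k * (elt lam h₀) * k⁻¹ = elt lam' h₀'} ≃
       {u : E n ≃ₗᵢ[ℝ] E n // u ∈ H₀ ∧ u * h₀ * u⁻¹ = h₀' ∧
          ∃ μ ∈ L, lam' - u lam = μ - h₀' μ}) := by
  exact ⟨fun u hu hc hex => key_lemma L lam lam' h₀ h₀' hfix u hc hex,
    bij_lemma L H₀ lam lam' h₀ h₀' hfix⟩
end

section
/- Let H = T_H ⋊ H₀ be a split group of Euclidean isometries and h₀ ∈ H₀. The map sending the component u Base_H(h₀) u⁻¹ of [h₀]_H to the element u h₀ u⁻¹ of [h₀]_{H₀} is a well-defined bijection between the set of components of [h₀]_H and the H₀-conjugacy class of h₀. -/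
lemma lin_apply {n : ℕ} (g : E n ≃ₗᵢ[ℝ] E n) (x : E n) : lin g x = g x := rfl

lemma lie_mul_apply {n : ℕ} (u g : E n ≃ₗᵢ[ℝ] E n) (x : E n) : (u * g) x = u (g x) := rfl

lemma lie_inv_apply {n : ℕ} (u : E n ≃ₗᵢ[ℝ] E n) (x : E n) : u⁻¹ x = u.symm x := rfl

lemma conj_elt {n : ℕ} (u : E n ≃ₗᵢ[ℝ] E n) (v : E n) (g : E n ≃ₗᵢ[ℝ] E n) :
    lin u * elt v g * (lin u)⁻¹ = elt (u v) (u * g * u⁻¹) := by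
  refine IsometryEquiv.ext fun x => ?_
  show u (elt v g (u.symm x)) = (u * g * u⁻¹) x + u v
  rw [show elt v g (u.symm x) = g (u.symm x) + v from rfl, map_add]
  rfl

/-- Base set of `k`. -/
def baseOf {n : ℕ} (L : AddSubgroup (E n)) (k : E n ≃ₗᵢ[ℝ] E n) : Set (E n ≃ᵢ E n) :=
  {g | ∃ μ ∈ modSet L (lin k), g = elt μ k}

lemma conj_base {n : ℕ} (L : AddSubgroup (E n)) (H₀ : Subgroup (E n ≃ₗᵢ[ℝ] E n))
    (hL : ∀ u ∈ H₀, ∀ v ∈ L, u v ∈ L) (h₀ : E n ≃ₗᵢ[ℝ] E n)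
    (u : E n ≃ₗᵢ[ℝ] E n) (hu : u ∈ H₀) :
    (fun b => lin u * b * (lin u)⁻¹) '' baseOf L h₀ = baseOf L (u * h₀ * u⁻¹) := by
  ext g
  constructor
  · rintro ⟨b, ⟨μ, ⟨ν, hν, hμ⟩, rfl⟩, rfl⟩
    refine ⟨u μ, ⟨u ν, hL u hu ν hν, ?_⟩, conj_elt u μ h₀⟩
    subst hμ
    simp [lin_apply, lie_mul_apply, lie_inv_apply, map_sub]
  · rintro ⟨μ, ⟨ν, hν, hμ⟩, rfl⟩
    refine ⟨elt (u.symm μ) h₀, ⟨u.symm μ, ⟨u.symm ν, hL u⁻¹ (inv_mem hu) ν hν, ?_⟩, rfl⟩, ?_⟩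
    · subst hμ
      simp [lin_apply, lie_mul_apply, lie_inv_apply, map_sub]
    · show lin u * elt (u.symm μ) h₀ * (lin u)⁻¹ = elt μ (u * h₀ * u⁻¹)
      rw [conj_elt]
      congr 1
      exact u.apply_symm_apply μ

lemma baseOf_inj {n : ℕ} (L : AddSubgroup (E n)) (k k' : E n ≃ₗᵢ[ℝ] E n)
    (h : baseOf L k = baseOf L k') : k = k' := by
  have h0 : elt 0 k ∈ baseOf L k :=
    ⟨0, ⟨0, L.zero_mem, by simp [lin_apply]⟩, rfl⟩
  rw [h] at h0
  obtain ⟨μ, _, he⟩ := h0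
  have hx : ∀ x, k x + 0 = k' x + μ := fun x => by
    have := congrArg (fun f : E n ≃ᵢ E n => f x) he
    exact this
  have h0' := hx 0
  simp only [map_zero, add_zero, zero_add] at h0'
  refine LinearIsometryEquiv.ext fun x => ?_
  have := hx x
  rw [← h0'] at this
  simpa using this

/-- The map sending the component `u Base_H(h₀) u⁻¹` of `[h₀]_H` to `u h₀ u⁻¹` is a
well-defined bijection from the set of components of `[h₀]_H` onto the `H₀`-conjugacy
class of `h₀`. -/
theorem stmt18 {n : ℕ} (L : AddSubgroup (E n)) (H₀ : Subgroup (E n ≃ₗᵢ[ℝ] E n))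
    (hL : ∀ u ∈ H₀, ∀ v ∈ L, u v ∈ L)
    (h₀ : E n ≃ₗᵢ[ℝ] E n) (hh₀ : h₀ ∈ H₀) :
    ∃ f : {S : Set (E n ≃ᵢ E n) // ∃ u ∈ H₀,
            S = (fun b => lin u * b * (lin u)⁻¹) ''
                  {g | ∃ μ ∈ modSet L (lin h₀), g = elt μ h₀}}
          ≃ {g : E n ≃ₗᵢ[ℝ] E n // ∃ u ∈ H₀, g = u * h₀ * u⁻¹},
      ∀ (u : E n ≃ₗᵢ[ℝ] E n) (hu : u ∈ H₀),
        (f ⟨(fun b => lin u * b * (lin u)⁻¹) ''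
              {g | ∃ μ ∈ modSet L (lin h₀), g = elt μ h₀}, ⟨u, hu, rfl⟩⟩ : _).1
          = u * h₀ * u⁻¹ := by
  classical
  have key : ∀ u ∈ H₀, ∀ u' ∈ H₀,
      (fun b => lin u * b * (lin u)⁻¹) '' baseOf L h₀ =
        (fun b => lin u' * b * (lin u')⁻¹) '' baseOf L h₀ ↔
      u * h₀ * u⁻¹ = u' * h₀ * u'⁻¹ := by
    intro u hu u' hu'
    rw [conj_base L H₀ hL h₀ u hu, conj_base L H₀ hL h₀ u' hu']
    exact ⟨baseOf_inj L _ _, fun h => by rw [h]⟩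
  let F : {S : Set (E n ≃ᵢ E n) // ∃ u ∈ H₀,
            S = (fun b => lin u * b * (lin u)⁻¹) ''
                  {g | ∃ μ ∈ modSet L (lin h₀), g = elt μ h₀}}
      → {g : E n ≃ₗᵢ[ℝ] E n // ∃ u ∈ H₀, g = u * h₀ * u⁻¹} := fun S =>
    ⟨S.2.choose * h₀ * S.2.choose⁻¹, S.2.choose, S.2.choose_spec.1, rfl⟩
  have hF : ∀ (u : E n ≃ₗᵢ[ℝ] E n) (hu : u ∈ H₀),
      (F ⟨(fun b => lin u * b * (lin u)⁻¹) ''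
            {g | ∃ μ ∈ modSet L (lin h₀), g = elt μ h₀}, ⟨u, hu, rfl⟩⟩).1
        = u * h₀ * u⁻¹ := by
    intro u hu
    set S : {S : Set (E n ≃ᵢ E n) // ∃ u ∈ H₀,
            S = (fun b => lin u * b * (lin u)⁻¹) ''
                  {g | ∃ μ ∈ modSet L (lin h₀), g = elt μ h₀}} :=
      ⟨(fun b => lin u * b * (lin u)⁻¹) ''
          {g | ∃ μ ∈ modSet L (lin h₀), g = elt μ h₀}, ⟨u, hu, rfl⟩⟩ with hS
    have h1 := S.2.choose_spec.1
    have h2 := S.2.choose_spec.2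
    exact (key _ h1 u hu).mp h2.symm
  have hinj : Function.Injective F := by
    rintro ⟨S, u, hu, rfl⟩ ⟨S', u', hu', rfl⟩ h
    have e1 := hF u hu
    have e2 := hF u' hu'
    have : u * h₀ * u⁻¹ = u' * h₀ * u'⁻¹ := by
      rw [← e1, ← e2]; exact congrArg Subtype.val h
    exact Subtype.ext ((key u hu u' hu').mpr this)
  have hsurj : Function.Surjective F := by
    rintro ⟨g, u, hu, rfl⟩
    exact ⟨⟨(fun b => lin u * b * (lin u)⁻¹) ''
        {g | ∃ μ ∈ modSet L (lin h₀), g = elt μ h₀}, ⟨u, hu, rfl⟩⟩, Subtype.ext (hF u hu)⟩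
  exact ⟨Equiv.ofBijective F ⟨hinj, hsurj⟩, hF⟩
end
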